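/- There exist six points v₀, …, v₅ of the Euclidean plane in general position (pairwise distinct, no three collinear) such that the closed polygon with segments sᵢ = [vᵢ, v_{(i+1) mod 6}] has at least 7 crossing pairs, i.e., at least 7 unordered pairs of non-adjacent segments (indices with j ≢ i, i±1 (mod 6)) with nonempty intersection. -/

import Mathlib

/-!
Take the hexagon with integer vertices (-4,-1), (1,2), (-2,-5), (2,-2), (-3,5), (1,-6).
Both general position and crossing are governed by the orientation determinant:
three points are non-collinear when it is nonzero, and two segments cross when each one's
endpoints lie strictly on opposite sides of the other's line. For integer points all these
signs are decided by computation, which finds no degenerate triple and seven crossing pairs.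
-/

open Set

def orient {R : Type*} [CommRing R] (a b c : R × R) : R :=
  (b.1 - a.1) * (c.2 - a.2) - (b.2 - a.2) * (c.1 - a.1)

def ProperlyCrosses {R : Type*} [CommRing R] [PartialOrder R] (a b c d : R × R) : Prop :=
  orient a b c * orient a b d < 0 ∧ orient c d a * orient c d b < 0

instance {R : Type*} [CommRing R] [PartialOrder R] [DecidableLT R] (a b c d : R × R) :
    Decidable (ProperlyCrosses a b c d) :=
  inferInstanceAs (Decidable (_ ∧ _))

def toProd (p : EuclideanSpace ℝ (Fin 2)) : ℝ × ℝ := (p 0, p 1)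

def ofIntPoint (p : ℤ × ℤ) : EuclideanSpace ℝ (Fin 2) := !₂[p.1, p.2]

theorem orient_toProd_ofIntPoint (a b c : ℤ × ℤ) :
    orient (toProd (ofIntPoint a)) (toProd (ofIntPoint b)) (toProd (ofIntPoint c)) =
      orient a b c := by
  simp [orient, toProd, ofIntPoint]

theorem properlyCrosses_toProd_ofIntPoint {a b c d : ℤ × ℤ} :
    ProperlyCrosses (toProd (ofIntPoint a)) (toProd (ofIntPoint b)) (toProd (ofIntPoint c))
      (toProd (ofIntPoint d)) ↔ ProperlyCrosses a b c d := by
  simp only [ProperlyCrosses, orient_toProd_ofIntPoint, ← Int.cast_mul, Int.cast_lt_zero]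

theorem not_collinear_of_orient_ne_zero {a b c : EuclideanSpace ℝ (Fin 2)}
    (h : orient (toProd a) (toProd b) (toProd c) ≠ 0) : ¬ Collinear ℝ {a, b, c} := by
  rw [collinear_iff_of_mem (mem_insert a _)]
  rintro ⟨w, hw⟩
  obtain ⟨r, rfl⟩ := hw b (by simp)
  obtain ⟨s, rfl⟩ := hw c (by simp)
  apply h
  simp only [orient, toProd, vadd_eq_add, PiLp.add_apply, PiLp.smul_apply, smul_eq_mul,
    add_sub_cancel_right]
  ring

theorem div_sub_mem_Icc_of_mul_neg {x y : ℝ} (h : x * y < 0) : x / (x - y) ∈ Icc 0 1 := by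
  rcases mul_neg_iff.1 h with ⟨hx, hy⟩ | ⟨hx, hy⟩
  · exact ⟨div_nonneg hx.le (by linarith), (div_le_one (by linarith)).2 (by linarith)⟩
  · exact ⟨div_nonneg_of_nonpos hx.le (by linarith),
      (div_le_one_of_neg (by linarith)).2 (by linarith)⟩

theorem segment_inter_nonempty_of_properlyCrosses {a b c d : EuclideanSpace ℝ (Fin 2)}
    (h : ProperlyCrosses (toProd a) (toProd b) (toProd c) (toProd d)) :
    (segment ℝ a b ∩ segment ℝ c d).Nonempty := by
  obtain ⟨hab, hcd⟩ := h
  have sub_ne_zero_of_mul_neg : ∀ {x y : ℝ}, x * y < 0 → x - y ≠ 0 := fun {x y} hxy hxy' => by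
    rw [sub_eq_zero.1 hxy'] at hxy
    exact (mul_self_nonneg y).not_gt hxy
  -- `orient c d ·` is affine and vanishes on the line cd, so that line meets ab at the
  -- parameter where it interpolates from `orient c d a` to `orient c d b` to zero.
  have meet : AffineMap.lineMap a b (orient (toProd c) (toProd d) (toProd a) /
        (orient (toProd c) (toProd d) (toProd a) - orient (toProd c) (toProd d) (toProd b))) =
      AffineMap.lineMap c d (orient (toProd a) (toProd b) (toProd c) /
        (orient (toProd a) (toProd b) (toProd c) - orient (toProd a) (toProd b) (toProd d))) := by
    have h₁ := sub_ne_zero_of_mul_neg hab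
    have h₂ := sub_ne_zero_of_mul_neg hcd
    simp only [orient, toProd] at h₁ h₂
    ext i
    fin_cases i <;>
      simp only [orient, toProd, AffineMap.lineMap_apply_module, Fin.zero_eta, Fin.mk_one,
        PiLp.add_apply, PiLp.smul_apply, smul_eq_mul] <;>
      field_simp <;> ring
  exact ⟨_, lineMap_mem_segment ℝ a b (div_sub_mem_Icc_of_mul_neg hcd),
    meet ▸ lineMap_mem_segment ℝ c d (div_sub_mem_Icc_of_mul_neg hab)⟩

def hexagon : Fin 6 → ℤ × ℤ := ![(-4, -1), (1, 2), (-2, -5), (2, -2), (-3, 5), (1, -6)]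

theorem hexagon_orient_ne_zero : ∀ i j k : Fin 6, i ≠ j → j ≠ k → i ≠ k →
    orient (hexagon i) (hexagon j) (hexagon k) ≠ 0 := by
  decide

theorem card_hexagon_crossings :
    (Finset.univ.filter fun p : Fin 6 × Fin 6 => p.1 < p.2 ∧ p.2 ≠ p.1 + 1 ∧ p.1 ≠ p.2 + 1 ∧
      ProperlyCrosses (hexagon p.1) (hexagon (p.1 + 1)) (hexagon p.2) (hexagon (p.2 + 1))).card
      = 7 := by
  decide

/-- There exist six points in general position in the plane whose closed hexagon has at
least 7 crossing pairs: unordered pairs of non-adjacent sides with nonempty intersection. -/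
theorem exists_hexagon_seven_crossings :
    ∃ v : Fin 6 → EuclideanSpace ℝ (Fin 2),
      (∀ i j : Fin 6, i ≠ j → v i ≠ v j) ∧
      (∀ i j k : Fin 6, i ≠ j → j ≠ k → i ≠ k →
        ¬ Collinear ℝ ({v i, v j, v k} : Set (EuclideanSpace ℝ (Fin 2)))) ∧
      7 ≤ ({p : Fin 6 × Fin 6 | p.1 < p.2 ∧
        p.2 ≠ p.1 + 1 ∧ p.1 ≠ p.2 + 1 ∧
        (segment ℝ (v p.1) (v (p.1 + 1)) ∩
          segment ℝ (v p.2) (v (p.2 + 1))).Nonempty}).ncard := by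
  have general_position : ∀ i j k : Fin 6, i ≠ j → j ≠ k → i ≠ k →
      ¬ Collinear ℝ {ofIntPoint (hexagon i), ofIntPoint (hexagon j), ofIntPoint (hexagon k)} :=
    fun i j k hij hjk hik => not_collinear_of_orient_ne_zero <| by
      rw [orient_toProd_ofIntPoint]
      exact_mod_cast hexagon_orient_ne_zero i j k hij hjk hik
  refine ⟨fun i => ofIntPoint (hexagon i), fun i j hij => ?_, general_position, ?_⟩
  · obtain ⟨k, hki, hkj⟩ := Fin.exists_ne_and_ne_of_two_lt i j (by norm_num)
    exact ne₁₂_of_not_collinear (general_position i j k hij (Ne.symm hkj) (Ne.symm hki))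
  · rw [← card_hexagon_crossings, ← ncard_coe_finset]
    refine ncard_le_ncard (fun p hp => ?_) (toFinite _)
    obtain ⟨hlt, hnext, hprev, hcross⟩ := Finset.mem_filter.1 hp |>.2
    exact ⟨hlt, hnext, hprev, segment_inter_nonempty_of_properlyCrosses
      (properlyCrosses_toProd_ofIntPoint.2 hcross)⟩
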